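/- Let $A\mathbf{U}_j = \mathbf{U}_j H_j + U_{j+1}\Gamma_{j+1} E_j^*$ be a block Arnoldi relation with $\mathbf{U}_{j+1} = [\mathbf{U}_j, U_{j+1}]$ having orthonormal columns, $B = \mathbf{U}_j E_1 R_B$, and $\mathbf{Z}_j$ with orthonormal columns such that $\mathbf{Z}_j^*\mathbf{U}_j$ is invertible; set $A_j := (\mathbf{Z}_j^*\mathbf{U}_j)^{-1}\mathbf{Z}_j^*A\mathbf{U}_j$ and $\Pi := I - \mathbf{U}_j(\mathbf{Z}_j^*\mathbf{U}_j)^{-1}\mathbf{Z}_j^*$. Then for every matrix polynomial $P(\lambda) = \sum_{i=0}^k \lambda^i P_i$ of degree $k \le j$: if $k < j$ then $P(A)\circ B = \mathbf{U}_j\,[P(A_j)\circ(E_1 R_B)]$, and if $k = j$ then $P(A)\circ B = \mathbf{U}_j\,[P(A_j)\circ(E_1 R_B)] + \Pi\, U_{j+1}\Gamma_{j+1}\cdots\Gamma_2\, R_B\, P_j$, where $\Gamma_2,\ldots,\Gamma_{j+1}$ are the subdiagonal blocks of the block Arnoldi Hessenberg matrix. -/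
import Mathlib


open Matrix Polynomial

abbrev Mat (s : ℕ) := Matrix (Fin s) (Fin s) ℂ

/-- The `(p,q)` block (of size `s × s`) of a `js × js` block matrix. -/
def blk {j s : ℕ} (H : Matrix (Fin j × Fin s) (Fin j × Fin s) ℂ) (p q : Fin j) :
    Mat s := Matrix.of fun a b => H (p, a) (q, b)

/-- The `i`-th block canonical vector `E_i = e_i ⊗ I_s`. -/
def blkE {j s : ℕ} (i : Fin j) : Matrix (Fin j × Fin s) (Fin s) ℂ :=
  Matrix.of fun pa b => if pa.1 = i ∧ pa.2 = b then 1 else 0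

/-- Block upper Hessenberg: all blocks strictly below the first subdiagonal vanish. -/
def BUH {j s : ℕ} (H : Matrix (Fin j × Fin s) (Fin j × Fin s) ℂ) : Prop :=
  ∀ p q : Fin j, (q : ℕ) + 1 < (p : ℕ) → blk H p q = 0

/-- The action `P(N) ∘ W := ∑ᵢ Nⁱ W Pᵢ` of a matrix polynomial on a block vector. -/
noncomputable def act {n : Type*} [Fintype n] [DecidableEq n] {s : ℕ}
    (P : Polynomial (Mat s)) (N : Matrix n n ℂ) (W : Matrix n (Fin s) ℂ) :
    Matrix n (Fin s) ℂ :=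
  ∑ i ∈ Finset.range (P.natDegree + 1), (N ^ i) * W * P.coeff i

/-- Evaluation of a matrix polynomial at a scalar: `P(z) = ∑ᵢ zⁱ Pᵢ`. -/
noncomputable def evalS {s : ℕ} (P : Polynomial (Mat s)) (z : ℂ) : Mat s :=
  ∑ i ∈ Finset.range (P.natDegree + 1), z ^ i • P.coeff i

/-- The subdiagonal block `Γ_i = H_{(i-1)(i-2)}` (paper indexing, `2 ≤ i ≤ j`),
with the convention `Γ_i = I` out of range (in particular `Γ₁ = I`). -/
noncomputable def Gam {j s : ℕ} (H : Matrix (Fin j × Fin s) (Fin j × Fin s) ℂ)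
    (i : ℕ) : Mat s :=
  if h : 2 ≤ i ∧ i ≤ j then blk H ⟨i - 1, by omega⟩ ⟨i - 2, by omega⟩ else 1

section Aux
variable {j s : ℕ}

lemma mul_blkE_apply {m : Type*} [Fintype m] (X : Matrix m (Fin j × Fin s) ℂ)
    (q : Fin j) (r : m) (b : Fin s) : (X * blkE (s := s) q) r b = X r (q, b) := by
  simp [Matrix.mul_apply, blkE, Fintype.sum_prod_type, ite_and, Finset.sum_ite_eq, Finset.sum_ite_eq']

lemma blkE_conjT_mul_apply {m : Type*} [Fintype m]
    (p : Fin j) (X : Matrix (Fin j × Fin s) m ℂ) (a : Fin s) (c : m) :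
    ((blkE (s := s) p)ᴴ * X) a c = X (p, a) c := by
  simp [Matrix.mul_apply, blkE, Matrix.conjTranspose_apply, Fintype.sum_prod_type, apply_ite, ite_and, Finset.sum_ite_eq, Finset.sum_ite_eq']

lemma E_mul_E (p q : Fin j) (X : Matrix (Fin j × Fin s) (Fin j × Fin s) ℂ) :
    (blkE (s := s) p)ᴴ * (X * blkE (s := s) q) = blk X p q := by
  ext a b
  rw [blkE_conjT_mul_apply, mul_blkE_apply]
  rfl

lemma blk_mul (X Y : Matrix (Fin j × Fin s) (Fin j × Fin s) ℂ) (p q : Fin j) :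
    blk (X * Y) p q = ∑ r, blk X p r * blk Y r q := by
  ext a b
  simp [blk, Matrix.mul_apply, Matrix.sum_apply, Fintype.sum_prod_type]

lemma blk_one (p q : Fin j) :
    blk (1 : Matrix (Fin j × Fin s) (Fin j × Fin s) ℂ) p q = if p = q then 1 else 0 := by
  ext a b
  by_cases h : p = q <;> simp [blk, Matrix.one_apply, Prod.ext_iff, h]

end Aux

section Hess
variable {j s : ℕ} {H : Matrix (Fin j × Fin s) (Fin j × Fin s) ℂ}

lemma blk_pow_zero (hH : BUH H) :
    ∀ (m : ℕ) (p q : Fin j), (q : ℕ) + m < (p : ℕ) → blk (H ^ m) p q = 0 := by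
  intro m
  induction m with
  | zero =>
      intro p q hpq
      rw [pow_zero, blk_one, if_neg]
      intro h; subst h; omega
  | succ m ih =>
      intro p q hpq
      rw [pow_succ, blk_mul]
      apply Finset.sum_eq_zero
      intro r _
      by_cases hr : (q : ℕ) + 1 < (r : ℕ)
      · rw [hH r q hr, mul_zero]
      · rw [ih p r (by omega), zero_mul]

lemma blk_congr {p p' q q' : Fin j} (hp : p = p') (hq : q = q') :
    blk H p q = blk H p' q' := by subst hp; subst hq; rfl

lemma blk_pow_subdiag (hH : BUH H) :
    ∀ (m : ℕ) (p q : Fin j), (p : ℕ) = (q : ℕ) + m →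
      blk (H ^ m) p q =
        ((List.range m).reverse.map (fun i => Gam H ((q : ℕ) + i + 2))).prod := by
  intro m
  induction m with
  | zero =>
      intro p q hpq
      have : p = q := Fin.ext (by omega)
      subst this
      simp [pow_zero, blk_one]
  | succ m ih =>
      intro p q hpq
      have hplt : (p : ℕ) < j := p.isLt
      have hqm : (q : ℕ) + m < j := by omega
      have hp : p = ⟨(q : ℕ) + m + 1, by omega⟩ := Fin.ext (by simp; omega)
      rw [pow_succ', blk_mul]
      rw [Finset.sum_eq_single (⟨(q : ℕ) + m, hqm⟩ : Fin j)]
      · have h1 : blk H p ⟨(q : ℕ) + m, hqm⟩ = Gam H ((q : ℕ) + m + 2) := by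
          rw [Gam, dif_pos ⟨by omega, by omega⟩]
          exact blk_congr (Fin.ext (show (p : ℕ) = (q : ℕ) + m + 2 - 1 by omega))
            (Fin.ext (show ((q : ℕ) + m : ℕ) = (q : ℕ) + m + 2 - 2 by omega))
        have h2 := ih ⟨(q : ℕ) + m, hqm⟩ q rfl
        rw [h1, h2, List.range_succ, List.reverse_append, List.reverse_singleton,
          List.singleton_append, List.map_cons, List.prod_cons]
      · intro b _ hb
        by_cases hb2 : (b : ℕ) + 1 < (p : ℕ)
        · rw [hH p b hb2, zero_mul]
        · have hbne : (b : ℕ) ≠ (q : ℕ) + m := fun h => hb (Fin.ext h)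
          have : (q : ℕ) + m < (b : ℕ) := by omega
          rw [blk_pow_zero hH m b q this, mul_zero]
      · intro h
        exact absurd (Finset.mem_univ _) h

end Hess

lemma blk_pow_subdiag' {j s : ℕ} {H : Matrix (Fin j × Fin s) (Fin j × Fin s) ℂ}
    (hH : BUH H) (m : ℕ) (p q : Fin j) (c : ℕ) (hq : (q : ℕ) = c)
    (hp : (p : ℕ) = c + m) :
    blk (H ^ m) p q = ((List.range m).reverse.map (fun i => Gam H (c + i + 2))).prod := by
  subst hq; exact blk_pow_subdiag hH m p q hp


/-- polynomial exactness of the Petrov–Galerkin projection: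
for `deg P < j`, `P(A)∘B = U_j [P(A_j)∘(E₁R_B)]`, and for `deg P = j` there is the
extra term `Π U_{j+1} Γ_{j+1}⋯Γ₂ R_B P_j`. -/
theorem block_poly_exactness {n j s : ℕ} (hj : 0 < j)
    (A : Matrix (Fin n) (Fin n) ℂ)
    (U Z : Matrix (Fin n) (Fin j × Fin s) ℂ)
    (u : Matrix (Fin n) (Fin s) ℂ)
    (Hj : Matrix (Fin j × Fin s) (Fin j × Fin s) ℂ) (Γ : Mat s)
    (harn : A * U = U * Hj + u * Γ * (blkE (s := s) (⟨j - 1, by omega⟩ : Fin j))ᴴ)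
    (hU : Uᴴ * U = 1) (hu : uᴴ * u = 1) (hUu : Uᴴ * u = 0)
    (hBUH : BUH Hj)
    (hsub : ∀ i : ℕ, 2 ≤ i → i ≤ j → IsUnit (Gam Hj i)) (hΓ : IsUnit Γ)
    (hZ : Zᴴ * Z = 1) (hZU : IsUnit (Zᴴ * U))
    (RB : Mat s) (hRB : IsUnit RB)
    (B : Matrix (Fin n) (Fin s) ℂ)
    (hB : B = U * blkE (s := s) (⟨0, hj⟩ : Fin j) * RB)
    (Aj : Matrix (Fin j × Fin s) (Fin j × Fin s) ℂ)
    (hAj : Aj = (Zᴴ * U)⁻¹ * (Zᴴ * A * U))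
    (P : Polynomial (Mat s)) :
    (P.natDegree < j →
      act P A B = U * act P Aj (blkE (s := s) (⟨0, hj⟩ : Fin j) * RB)) ∧
    (P.natDegree = j →
      act P A B = U * act P Aj (blkE (s := s) (⟨0, hj⟩ : Fin j) * RB) +
        (1 - U * (Zᴴ * U)⁻¹ * Zᴴ) * u *
          (Γ * ((List.range (j - 1)).reverse.map (fun m => Gam Hj (m + 2))).prod) *
          RB * P.coeff j) := by
  set e1 : Fin j := ⟨0, hj⟩ with he1
  set jl : Fin j := ⟨j - 1, by omega⟩ with hjl
  set G : Mat s := ((List.range (j - 1)).reverse.map (fun m => Gam Hj (m + 2))).prod with hG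
  have harn' : A * U = U * Hj + u * Γ * (blkE (s := s) jl)ᴴ := harn
  have hdet : IsUnit (Zᴴ * U).det := (Matrix.isUnit_iff_isUnit_det _).mp hZU
  have hinv : (Zᴴ * U)⁻¹ * (Zᴴ * U) = 1 := Matrix.nonsing_inv_mul _ hdet
  have hZAU : Zᴴ * A * U = Zᴴ * U * Hj + Zᴴ * u * Γ * (blkE (s := s) jl)ᴴ := by
    rw [Matrix.mul_assoc, harn']
    simp only [Matrix.mul_add, Matrix.mul_assoc]
  have hAj' : Aj = Hj + ((Zᴴ * U)⁻¹ * (Zᴴ * u * Γ)) * (blkE (s := s) jl)ᴴ := by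
    rw [hAj, hZAU, Matrix.mul_add]
    congr 1
    · rw [← Matrix.mul_assoc, hinv, Matrix.one_mul]
    · simp only [Matrix.mul_assoc]
  have hres : ∀ i : ℕ, i < j - 1 →
      (blkE (s := s) jl)ᴴ * (Hj ^ i * blkE (s := s) e1) = 0 := by
    intro i hi
    rw [E_mul_E]
    exact blk_pow_zero hBUH i jl e1 (show (0 : ℕ) + i < j - 1 by omega)
  have claimA : ∀ i : ℕ, i < j →
      A ^ i * (U * blkE (s := s) e1) = U * (Hj ^ i * blkE (s := s) e1) := by
    intro i
    induction i with
    | zero => intro _; rw [pow_zero, pow_zero, Matrix.one_mul, Matrix.one_mul]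
    | succ i ih =>
      intro hi
      calc A ^ (i + 1) * (U * blkE (s := s) e1)
          = A * (A ^ i * (U * blkE (s := s) e1)) := by rw [pow_succ', Matrix.mul_assoc]
        _ = (A * U) * (Hj ^ i * blkE (s := s) e1) := by rw [ih (by omega), ← Matrix.mul_assoc]
        _ = U * (Hj ^ (i + 1) * blkE (s := s) e1) := by
            rw [harn', Matrix.add_mul, Matrix.mul_assoc (u * Γ), hres i (by omega), Matrix.mul_zero,
              add_zero, Matrix.mul_assoc U Hj, ← Matrix.mul_assoc Hj, ← pow_succ']
  have claimB : ∀ i : ℕ, i < j →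
      Aj ^ i * blkE (s := s) e1 = Hj ^ i * blkE (s := s) e1 := by
    intro i
    induction i with
    | zero => intro _; rw [pow_zero, pow_zero]
    | succ i ih =>
      intro hi
      calc Aj ^ (i + 1) * blkE (s := s) e1
          = Aj * (Aj ^ i * blkE (s := s) e1) := by rw [pow_succ', Matrix.mul_assoc]
        _ = (Hj + ((Zᴴ * U)⁻¹ * (Zᴴ * u * Γ)) * (blkE (s := s) jl)ᴴ) *
              (Hj ^ i * blkE (s := s) e1) := by rw [ih (by omega), hAj']
        _ = Hj ^ (i + 1) * blkE (s := s) e1 := by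
            rw [Matrix.add_mul, Matrix.mul_assoc ((Zᴴ * U)⁻¹ * (Zᴴ * u * Γ)), hres i (by omega),
              Matrix.mul_zero, add_zero, ← Matrix.mul_assoc, ← pow_succ']
  have term_eq : ∀ i : ℕ, i < j →
      A ^ i * B * P.coeff i = U * (Aj ^ i * (blkE (s := s) e1 * RB) * P.coeff i) := by
    intro i hi
    rw [hB, ← Matrix.mul_assoc, claimA i hi, ← claimB i hi]
    simp only [Matrix.mul_assoc]
  refine ⟨?_, ?_⟩
  · intro hdeg
    simp only [act]
    rw [Matrix.mul_sum]
    exact Finset.sum_congr rfl fun i hi =>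
      term_eq i (by have := Finset.mem_range.mp hi; omega)
  · intro hdeg
    have hjj : j = (j - 1) + 1 := by omega
    have hpw : ∀ {M : Type} [Monoid M] (x : M), x ^ j = x * x ^ (j - 1) := by
      intro M _ x
      have h := pow_succ' x (j - 1)
      rw [← hjj] at h
      exact h
    have hAp : A ^ j = A * A ^ (j - 1) := hpw A
    have hHp : Hj ^ j = Hj * Hj ^ (j - 1) := hpw Hj
    have hAjp : Aj ^ j = Aj * Aj ^ (j - 1) := hpw Aj
    have hGE : (blkE (s := s) jl)ᴴ * (Hj ^ (j - 1) * blkE (s := s) e1) = G := by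
      rw [E_mul_E, blk_pow_subdiag' hBUH (j - 1) jl e1 0 rfl
        (show (j : ℕ) - 1 = 0 + (j - 1) by omega)]
      simp only [zero_add, hG]
    have claimAjA : A ^ j * (U * blkE (s := s) e1) =
        U * (Hj ^ j * blkE (s := s) e1) + (u * Γ) * G := by
      calc A ^ j * (U * blkE (s := s) e1)
          = A * (A ^ (j - 1) * (U * blkE (s := s) e1)) := by rw [hAp, Matrix.mul_assoc]
        _ = (A * U) * (Hj ^ (j - 1) * blkE (s := s) e1) := by
            rw [claimA (j - 1) (by omega), ← Matrix.mul_assoc]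
        _ = U * (Hj ^ j * blkE (s := s) e1) + (u * Γ) * G := by
            rw [harn', Matrix.add_mul, Matrix.mul_assoc (u * Γ), hGE, Matrix.mul_assoc U Hj,
              ← Matrix.mul_assoc Hj, ← hHp]
    have claimBjA : Aj ^ j * blkE (s := s) e1 =
        Hj ^ j * blkE (s := s) e1 + ((Zᴴ * U)⁻¹ * (Zᴴ * u * Γ)) * G := by
      calc Aj ^ j * blkE (s := s) e1
          = Aj * (Hj ^ (j - 1) * blkE (s := s) e1) := by
            rw [hAjp, Matrix.mul_assoc, claimB (j - 1) (by omega)]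
        _ = Hj ^ j * blkE (s := s) e1 + ((Zᴴ * U)⁻¹ * (Zᴴ * u * Γ)) * G := by
            rw [hAj', Matrix.add_mul, Matrix.mul_assoc ((Zᴴ * U)⁻¹ * (Zᴴ * u * Γ)), hGE,
              ← Matrix.mul_assoc Hj, ← hHp]
    have last' : A ^ j * B * P.coeff j =
        U * (Aj ^ j * (blkE (s := s) e1 * RB) * P.coeff j) +
          (1 - U * (Zᴴ * U)⁻¹ * Zᴴ) * u * (Γ * G) * RB * P.coeff j := by
      rw [hB, ← Matrix.mul_assoc, claimAjA]
      have hstep : Aj ^ j * (blkE (s := s) e1 * RB) =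
          (Hj ^ j * blkE (s := s) e1 + ((Zᴴ * U)⁻¹ * (Zᴴ * u * Γ)) * G) * RB := by
        rw [← Matrix.mul_assoc, claimBjA]
      rw [hstep]
      simp only [Matrix.add_mul, Matrix.mul_add, Matrix.sub_mul, Matrix.one_mul, Matrix.mul_assoc]
      abel
    simp only [act, hdeg]
    rw [Matrix.mul_sum, Finset.sum_range_succ, Finset.sum_range_succ,
      Finset.sum_congr rfl fun i hi => term_eq i (Finset.mem_range.mp hi), add_assoc]
    congr 1
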